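/- Let G and H be connected graphs of order at least two. Then max{ 2·sdim_f(G), 2·sdim_f(H) } ≤ sdim_f(G □ H) ≤ min{ |M(G)|·sdim_f(H), |M(H)|·sdim_f(G) }. -/

import Mathlib

open SimpleGraph

/-- `Sset G x y` is the set `S{x,y}` of vertices `z` such that `x` lies on some shortest
`y`–`z` path or `y` lies on some shortest `x`–`z` path in `G`. -/
def Sset {V : Type*} (G : SimpleGraph V) (x y : V) : Set V :=
  {z | (∃ p : G.Walk y z, p.length = G.dist y z ∧ x ∈ p.support) ∨
       (∃ p : G.Walk x z, p.length = G.dist x z ∧ y ∈ p.support)}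

/-- A strong resolving function of `G`: `g : V → [0,1]` with `g(S{x,y}) ≥ 1` for all
distinct vertices `x, y`. -/
def IsSRF {V : Type*} (G : SimpleGraph V) (g : V → ℝ) : Prop :=
  (∀ v, 0 ≤ g v ∧ g v ≤ 1) ∧ ∀ x y : V, x ≠ y → 1 ≤ ∑ᶠ z ∈ Sset G x y, g z

/-- The fractional strong metric dimension of `G`. -/
noncomputable def sdimf {V : Type*} (G : SimpleGraph V) : ℝ :=
  sInf {s : ℝ | ∃ g : V → ℝ, IsSRF G g ∧ s = ∑ᶠ v, g v}

/-- A strong resolving set of `G`: every pair of distinct vertices is strongly resolved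
by some vertex of `S` (i.e. some vertex of `S` lies in `S{x,y}`). -/
def IsSRSet {V : Type*} (G : SimpleGraph V) (S : Set V) : Prop :=
  ∀ x y : V, x ≠ y → ∃ z ∈ S, z ∈ Sset G x y

/-- The strong metric dimension of `G`: the minimum cardinality of a strong resolving set. -/
noncomputable def sdim {V : Type*} (G : SimpleGraph V) : ℕ :=
  sInf {n : ℕ | ∃ S : Set V, IsSRSet G S ∧ S.ncard = n}

/-- `u` is maximally distant from `v`: `d(u,v) ≥ d(w,v)` for every neighbor `w` of `u`. -/
def MaxDistFrom {V : Type*} (G : SimpleGraph V) (u v : V) : Prop :=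
  ∀ w : V, G.Adj u w → G.dist w v ≤ G.dist u v

/-- `u` and `v` are mutually maximally distant (MMD) in `G`. -/
def MMD {V : Type*} (G : SimpleGraph V) (u v : V) : Prop :=
  u ≠ v ∧ MaxDistFrom G u v ∧ MaxDistFrom G v u

/-- The strong resolving graph of `G` (on the ambient vertex set): `u ~ v` iff `u` MMD `v`. -/
def SRGraph {V : Type*} (G : SimpleGraph V) : SimpleGraph V where
  Adj := MMD G
  symm := ⟨fun _ _ h => ⟨h.1.symm, h.2.2, h.2.1⟩⟩
  loopless := ⟨fun _ h => h.1 rfl⟩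

/-- `M(G)`: the set of vertices that are mutually maximally distant with some vertex. -/
def Mset {V : Type*} (G : SimpleGraph V) : Set V := {x | ∃ y, MMD G x y}

/-- The matching number of `G`. -/
noncomputable def matchNum {V : Type*} (G : SimpleGraph V) : ℕ :=
  sSup {n : ℕ | ∃ M : G.Subgraph, M.IsMatching ∧ M.edgeSet.ncard = n}

/-- The corona product `G ⊙ H`. -/
def corona {V W : Type*} (G : SimpleGraph V) (H : SimpleGraph W) :
    SimpleGraph (V ⊕ V × W) where
  Adj x y :=
    match x, y with
    | Sum.inl u, Sum.inl u' => G.Adj u u'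
    | Sum.inl u, Sum.inr iw => u = iw.1
    | Sum.inr iw, Sum.inl u => iw.1 = u
    | Sum.inr iw, Sum.inr iw' => iw.1 = iw'.1 ∧ H.Adj iw.2 iw'.2
  symm := by
    constructor
    rintro (u | iw) (u' | iw') h
    · exact G.adj_symm h
    · exact h.symm
    · exact h.symm
    · exact ⟨h.1.symm, H.adj_symm h.2⟩
  loopless := by
    constructor
    rintro (u | iw) h
    · exact G.irrefl h
    · exact H.irrefl h.2

/-- `K₁ ⊙ H`: the graph obtained from `H` by adding one new vertex adjacent to every
vertex of `H`. -/
def cone {W : Type*} (H : SimpleGraph W) : SimpleGraph (Option W) where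
  Adj x y :=
    match x, y with
    | none, none => False
    | none, some _ => True
    | some _, none => True
    | some w, some w' => H.Adj w w'
  symm := by
    constructor
    rintro (_ | w) (_ | w') h
    · exact h
    · exact trivial
    · exact trivial
    · exact H.adj_symm h
  loopless := by
    constructor
    rintro (_ | w) h
    · exact h
    · exact H.irrefl h

/-- The lexicographic product `G[H]`. -/
def lexProd {V W : Type*} (G : SimpleGraph V) (H : SimpleGraph W) :
    SimpleGraph (V × W) where
  Adj x y := G.Adj x.1 y.1 ∨ (x.1 = y.1 ∧ H.Adj x.2 y.2)
  symm := by
    constructor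
    rintro x y (h | ⟨h1, h2⟩)
    · exact Or.inl (G.adj_symm h)
    · exact Or.inr ⟨h1.symm, H.adj_symm h2⟩
  loopless := by
    constructor
    rintro x (h | ⟨_, h2⟩)
    · exact G.irrefl h
    · exact H.irrefl h2

/-- `SL{x,y} = (N[x] ∪ N[y]) ∩ S{x,y}`. -/
def SLset {W : Type*} (H : SimpleGraph W) (x y : W) : Set W :=
  (insert x (H.neighborSet x) ∪ insert y (H.neighborSet y)) ∩ Sset H x y

/-- A strong locating function of `H`. -/
def IsSLF {W : Type*} (H : SimpleGraph W) (f : W → ℝ) : Prop :=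
  (∀ v, 0 ≤ f v ∧ f v ≤ 1) ∧ ∀ x y : W, x ≠ y → 1 ≤ ∑ᶠ z ∈ SLset H x y, f z

/-- `sl_f(H)`: the minimum weight of a strong locating function of `H`. -/
noncomputable def slf {W : Type*} (H : SimpleGraph W) : ℝ :=
  sInf {s : ℝ | ∃ f : W → ℝ, IsSLF H f ∧ s = ∑ᶠ v, f v}

/-- `u` has a true twin: some other vertex with the same closed neighborhood. -/
def HasTrueTwin {V : Type*} (G : SimpleGraph V) (u : V) : Prop :=
  ∃ v : V, v ≠ u ∧ insert v (G.neighborSet v) = insert u (G.neighborSet u)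

/-- `u` has a false twin: some other vertex with the same open neighborhood. -/
def HasFalseTwin {V : Type*} (G : SimpleGraph V) (u : V) : Prop :=
  ∃ v : V, v ≠ u ∧ G.neighborSet v = G.neighborSet u

/-- `m₁(G)`: number of vertices in type-1 (singleton) classes of the twin relation. -/
noncomputable def m1 {V : Type*} (G : SimpleGraph V) : ℕ :=
  {u : V | ¬ HasTrueTwin G u ∧ ¬ HasFalseTwin G u}.ncard

/-- `m₂(G)`: number of vertices in type-2 (clique) classes of the twin relation. -/
noncomputable def m2 {V : Type*} (G : SimpleGraph V) : ℕ :=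
  {u : V | HasTrueTwin G u}.ncard

/-- `m₃(G)`: number of vertices in type-3 (independent set) classes of the twin relation. -/
noncomputable def m3 {V : Type*} (G : SimpleGraph V) : ℕ :=
  {u : V | HasFalseTwin G u}.ncard

/-- The strong resolving graph of `G` (whose vertex set is `M(G)`) is Hamiltonian:
there is a cycle in `SRGraph G` passing through every vertex of `M(G)`. -/
def SRHamiltonian {V : Type*} (G : SimpleGraph V) : Prop :=
  ∃ (u : V) (p : (SRGraph G).Walk u u), p.IsCycle ∧ ∀ v ∈ Mset G, v ∈ p.support

/-! Distances add in `G □ H`, so `S{(x,u),(y,v)}` and `S{(x,v),(y,u)}` are disjoint and together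
make up `S{x,y} × S{u,v}`. A strong resolving function of `G □ H` therefore has weight at least `2`
on `S{x,y} × S{u,v}`; summing it over `S{u,v}` for one fixed pair `u ≠ v`, halving and truncating
at `1` gives a strong resolving function of `G` of at most half its weight. Conversely, each pair
`x, y` of `G` extends beyond both of its ends to two distinct vertices of `M(G)`, so a strong
resolving function of `H` copied onto every fibre `{a} × H` with `a ∈ M(G)` strongly resolves
`G □ H`. The other two bounds follow from `G □ H ≅ H □ G`. -/

open Set

section Finsum

variable {α β M : Type*}

lemma finsum_mem_le_finsum_mem_of_subset {s t : Set α} {f : α → ℝ} (hf : ∀ a, 0 ≤ f a)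
    (ht : t.Finite) (h : s ⊆ t) : ∑ᶠ a ∈ s, f a ≤ ∑ᶠ a ∈ t, f a := by
  rw [finsum_mem_eq_finite_toFinset_sum f (ht.subset h), finsum_mem_eq_finite_toFinset_sum f ht]
  exact Finset.sum_le_sum_of_subset_of_nonneg (Finite.toFinset_subset_toFinset.mpr h)
    fun a _ _ => hf a

lemma finsum_mem_union_le {s t : Set α} {f : α → ℝ} (hf : ∀ a, 0 ≤ f a) (hs : s.Finite)
    (ht : t.Finite) : ∑ᶠ a ∈ s ∪ t, f a ≤ ∑ᶠ a ∈ s, f a + ∑ᶠ a ∈ t, f a := by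
  rw [← finsum_mem_union_inter hs ht]
  exact le_add_of_nonneg_right (finsum_nonneg fun a => finsum_nonneg fun _ => hf a)

lemma finsum_mem_prod [AddCommMonoid M] {s : Set α} {t : Set β} (f : α × β → M)
    (hs : s.Finite) (ht : t.Finite) :
    ∑ᶠ p ∈ s ×ˢ t, f p = ∑ᶠ a ∈ s, ∑ᶠ b ∈ t, f (a, b) := by
  rw [finsum_mem_eq_finite_toFinset_sum f (hs.prod ht), ← Finite.toFinset_prod hs ht,
    Finset.sum_product, finsum_mem_eq_finite_toFinset_sum _ hs]
  exact Finset.sum_congr rfl fun a _ => (finsum_mem_eq_finite_toFinset_sum _ ht).symm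

end Finsum

namespace SimpleGraph

variable {V W : Type*} {G : SimpleGraph V} {H : SimpleGraph W}

/-- The vertices `z` such that `x` lies on a shortest `y`–`z` path (for connected `G`). -/
def beyond (G : SimpleGraph V) (y x : V) : Set V :=
  {z | G.dist y x + G.dist x z = G.dist y z}

lemma self_mem_beyond (y x : V) : x ∈ G.beyond y x := by
  simp [beyond]

lemma beyond_self (x : V) : G.beyond x x = univ := by
  ext z
  simp [beyond]

lemma exists_shortest_walk_mem_support_iff (hG : G.Connected) {x y z : V} :
    (∃ p : G.Walk y z, p.length = G.dist y z ∧ x ∈ p.support) ↔ z ∈ G.beyond y x := by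
  classical
  constructor
  · rintro ⟨p, hp, hx⟩
    have hsplit := congrArg Walk.length (p.take_spec hx)
    rw [Walk.length_append] at hsplit
    have h₁ := G.dist_le (p.takeUntil x hx)
    have h₂ := G.dist_le (p.dropUntil x hx)
    have h₃ : G.dist y z ≤ G.dist y x + G.dist x z := hG.dist_triangle
    simp only [beyond, mem_ofPred_eq]
    omega
  · intro hz
    obtain ⟨p, hp⟩ := hG.exists_walk_length_eq_dist y x
    obtain ⟨q, hq⟩ := hG.exists_walk_length_eq_dist x z
    refine ⟨p.append q, ?_, (p.mem_support_append_iff q).mpr (.inl p.end_mem_support)⟩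
    rw [Walk.length_append, hp, hq]
    exact hz

lemma Sset_eq_beyond_union (hG : G.Connected) (x y : V) :
    Sset G x y = G.beyond y x ∪ G.beyond x y :=
  ext fun _ => (exists_shortest_walk_mem_support_iff hG).or
    (exists_shortest_walk_mem_support_iff hG)

lemma Sset_self (hG : G.Connected) (x : V) : Sset G x x = univ := by
  rw [Sset_eq_beyond_union hG, beyond_self, union_self]

lemma disjoint_beyond (hG : G.Connected) {x y : V} (hxy : x ≠ y) :
    Disjoint (G.beyond y x) (G.beyond x y) := by
  refine Set.disjoint_left.mpr fun z h₁ h₂ => ?_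
  have hpos := hG.pos_dist_of_ne hxy
  have hcomm : G.dist y x = G.dist x y := dist_comm
  simp only [beyond, mem_ofPred_eq] at h₁ h₂
  omega

lemma Connected.dist_boxProd (hG : G.Connected) (hH : H.Connected) (p q : V × W) :
    (G □ H).dist p q = G.dist p.1 q.1 + H.dist p.2 q.2 := by
  have h := ((hG.boxProd hH).preconnected p q).coe_dist_eq_edist
  rw [edist_boxProd, ← (hG.preconnected p.1 q.1).coe_dist_eq_edist,
    ← (hH.preconnected p.2 q.2).coe_dist_eq_edist] at h
  exact_mod_cast h

lemma beyond_boxProd (hG : G.Connected) (hH : H.Connected) (x y : V) (u v : W) :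
    (G □ H).beyond (y, v) (x, u) = G.beyond y x ×ˢ H.beyond v u := by
  ext ⟨a, b⟩
  have h₁ : G.dist y a ≤ G.dist y x + G.dist x a := hG.dist_triangle
  have h₂ : H.dist v b ≤ H.dist v u + H.dist u b := hH.dist_triangle
  simp only [beyond, mem_ofPred_eq, mem_prod, hG.dist_boxProd hH]
  omega

lemma Sset_boxProd (hG : G.Connected) (hH : H.Connected) (x y : V) (u v : W) :
    Sset (G □ H) (x, u) (y, v) = G.beyond y x ×ˢ H.beyond v u ∪ G.beyond x y ×ˢ H.beyond u v := by
  rw [Sset_eq_beyond_union (hG.boxProd hH), beyond_boxProd hG hH, beyond_boxProd hG hH]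

lemma sdimf_le {g : V → ℝ} (hg : IsSRF G g) : sdimf G ≤ ∑ᶠ v, g v :=
  csInf_le ⟨0, by rintro _ ⟨g, hg, rfl⟩; exact finsum_nonneg fun v => (hg.1 v).1⟩ ⟨g, hg, rfl⟩

lemma isSRF_one [Finite V] (hG : G.Connected) : IsSRF G 1 := by
  refine ⟨fun _ => ⟨zero_le_one, le_rfl⟩, fun x y _ => ?_⟩
  have hx : x ∈ Sset G x y := by
    rw [Sset_eq_beyond_union hG]
    exact .inl (self_mem_beyond y x)
  calc (1 : ℝ) = ∑ᶠ z ∈ ({x} : Set V), (1 : V → ℝ) z := by rw [finsum_mem_singleton]; rfl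
    _ ≤ _ := finsum_mem_le_finsum_mem_of_subset (fun _ => zero_le_one) (toFinite _)
        (singleton_subset_iff.mpr hx)

lemma le_sdimf [Finite V] (hG : G.Connected) {c : ℝ} (h : ∀ g, IsSRF G g → c ≤ ∑ᶠ v, g v) :
    c ≤ sdimf G :=
  le_csInf ⟨_, 1, isSRF_one hG, rfl⟩ (by rintro _ ⟨g, hg, rfl⟩; exact h g hg)

/-- Truncating `h / c` at `1` gives a strong resolving function. -/
lemma mul_sdimf_le_finsum [Finite V] {h : V → ℝ} {c : ℝ} (hc : 0 < c) (hh : ∀ v, 0 ≤ h v)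
    (hS : ∀ x y, x ≠ y → c ≤ ∑ᶠ z ∈ Sset G x y, h z) : c * sdimf G ≤ ∑ᶠ v, h v := by
  set f : V → ℝ := fun v => min 1 (h v / c)
  have hf₀ : ∀ v, 0 ≤ f v := fun v => le_min zero_le_one (div_nonneg (hh v) hc.le)
  have hf : IsSRF G f := by
    refine ⟨fun v => ⟨hf₀ v, min_le_left _ _⟩, fun x y hxy => ?_⟩
    by_cases hbig : ∃ z ∈ Sset G x y, c ≤ h z
    · obtain ⟨z, hz, hcz⟩ := hbig
      calc (1 : ℝ) = ∑ᶠ w ∈ ({z} : Set V), f w := by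
            rw [finsum_mem_singleton]
            exact (min_eq_left ((one_le_div hc).mpr hcz)).symm
        _ ≤ _ := finsum_mem_le_finsum_mem_of_subset hf₀ (toFinite _)
            (singleton_subset_iff.mpr hz)
    · push Not at hbig
      calc (1 : ℝ) ≤ (∑ᶠ z ∈ Sset G x y, h z) / c := (one_le_div hc).mpr (hS x y hxy)
        _ = ∑ᶠ z ∈ Sset G x y, f z := by
          rw [div_eq_mul_inv, finsum_mem_mul]
          exact finsum_mem_congr rfl fun z hz =>
            (min_eq_right ((div_le_one hc).mpr (hbig z hz).le)).symm
  have hfh : f ≤ fun v => h v / c := fun v => min_le_right _ _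
  calc c * sdimf G ≤ c * ∑ᶠ v, h v / c :=
        mul_le_mul_of_nonneg_left ((sdimf_le hf).trans (finsum_le_finsum'
          (toFinite _) (toFinite _) hfh)) hc.le
    _ = ∑ᶠ v, h v := by
      rw [mul_finsum]
      exact finsum_congr fun v => mul_div_cancel₀ _ hc.ne'

lemma Sset_prod_eq_union_Sset_boxProd (hG : G.Connected) (hH : H.Connected) (x y : V)
    (u v : W) : Sset G x y ×ˢ Sset H u v =
      Sset (G □ H) (x, u) (y, v) ∪ Sset (G □ H) (x, v) (y, u) := by
  rw [Sset_boxProd hG hH, Sset_boxProd hG hH, Sset_eq_beyond_union hG,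
    Sset_eq_beyond_union hH, union_prod, prod_union, prod_union]
  ext p
  simp only [mem_union]
  tauto

lemma disjoint_Sset_boxProd (hG : G.Connected) (hH : H.Connected) {x y : V} {u v : W}
    (hxy : x ≠ y) (huv : u ≠ v) :
    Disjoint (Sset (G □ H) (x, u) (y, v)) (Sset (G □ H) (x, v) (y, u)) := by
  have hV := disjoint_beyond hG hxy
  have hW := disjoint_beyond hH huv
  rw [Sset_boxProd hG hH, Sset_boxProd hG hH]
  simp only [disjoint_union_left, disjoint_union_right, disjoint_prod]
  exact ⟨⟨.inr hW, .inl hV.symm⟩, .inl hV, .inr hW.symm⟩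

lemma two_le_finsum_Sset_prod [Finite V] [Finite W] (hG : G.Connected) (hH : H.Connected)
    {g : V × W → ℝ} (hg : IsSRF (G □ H) g) {x y : V} {u v : W} (hxy : x ≠ y) (huv : u ≠ v) :
    2 ≤ ∑ᶠ p ∈ Sset G x y ×ˢ Sset H u v, g p := by
  rw [Sset_prod_eq_union_Sset_boxProd hG hH,
    finsum_mem_union (disjoint_Sset_boxProd hG hH hxy huv) (toFinite _) (toFinite _)]
  have h₁ := hg.2 (x, u) (y, v) (by simp [hxy])
  have h₂ := hg.2 (x, v) (y, u) (by simp [hxy])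
  linarith

lemma two_mul_sdimf_le_finsum [Finite V] [Finite W] [Nontrivial W] (hG : G.Connected)
    (hH : H.Connected) {g : V × W → ℝ} (hg : IsSRF (G □ H) g) :
    2 * sdimf G ≤ ∑ᶠ p, g p := by
  obtain ⟨u, v, huv⟩ := exists_pair_ne W
  have hg₀ : ∀ p, 0 ≤ g p := fun p => (hg.1 p).1
  calc 2 * sdimf G ≤ ∑ᶠ a, ∑ᶠ b ∈ Sset H u v, g (a, b) := by
        refine mul_sdimf_le_finsum two_pos (fun a => finsum_nonneg fun b =>
          finsum_nonneg fun _ => hg₀ _) fun x y hxy => ?_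
        rw [← finsum_mem_prod g (toFinite _) (toFinite _)]
        exact two_le_finsum_Sset_prod hG hH hg hxy huv
    _ = ∑ᶠ p ∈ univ ×ˢ Sset H u v, g p := by
      rw [finsum_mem_prod g (toFinite _) (toFinite _), finsum_mem_univ]
    _ ≤ ∑ᶠ p ∈ univ, g p := finsum_mem_le_finsum_mem_of_subset hg₀ (toFinite _) (subset_univ _)
    _ = ∑ᶠ p, g p := finsum_mem_univ g

theorem two_mul_sdimf_le_sdimf_boxProd [Finite V] [Finite W] [Nontrivial W]
    (hG : G.Connected) (hH : H.Connected) : 2 * sdimf G ≤ sdimf (G □ H) :=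
  le_sdimf (hG.boxProd hH) fun _ hg => two_mul_sdimf_le_finsum hG hH hg

lemma exists_mem_beyond_maxDistFrom [Finite V] (hG : G.Connected) (x y : V) :
    ∃ a ∈ G.beyond y x, MaxDistFrom G a y := by
  obtain ⟨a, ha, hmax⟩ := (G.beyond y x).exists_max_image (G.dist y) (toFinite _)
    ⟨x, self_mem_beyond y x⟩
  refine ⟨a, ha, fun w haw => not_lt.mp fun hlt => ?_⟩
  have h₁ : G.dist a w = 1 := dist_eq_one_iff_adj.mpr haw
  have h₂ : G.dist y w ≤ G.dist y a + G.dist a w := hG.dist_triangle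
  have h₃ : G.dist x w ≤ G.dist x a + G.dist a w := hG.dist_triangle
  have h₄ : G.dist y w ≤ G.dist y x + G.dist x w := hG.dist_triangle
  have h₅ : G.dist w y = G.dist y w := dist_comm
  have h₆ : G.dist a y = G.dist y a := dist_comm
  simp only [beyond, mem_ofPred_eq] at ha
  have hw : w ∈ G.beyond y x := by
    simp only [beyond, mem_ofPred_eq]
    omega
  have := hmax w hw
  omega

/-- A vertex `c` farthest from `a` among those from which `a` is maximally distant is
mutually maximally distant with `a`. -/
lemma mem_Mset_of_maxDistFrom [Finite V] [Nontrivial V] (hG : G.Connected) {a y : V}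
    (h : MaxDistFrom G a y) : a ∈ Mset G := by
  obtain ⟨c, hc, hmax⟩ := {b | MaxDistFrom G a b}.exists_max_image (G.dist a) (toFinite _) ⟨y, h⟩
  have hca : MaxDistFrom G c a := fun w hcw => not_lt.mp fun hlt => by
    have h₁ : G.dist c w = 1 := dist_eq_one_iff_adj.mpr hcw
    have h₂ : G.dist a w ≤ G.dist a c + G.dist c w := hG.dist_triangle
    have h₃ : G.dist w a = G.dist a w := dist_comm
    have h₄ : G.dist c a = G.dist a c := dist_comm
    have hw : MaxDistFrom G a w := fun z haz => by
      have := hc z haz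
      have : G.dist z w ≤ G.dist z c + G.dist c w := hG.dist_triangle
      omega
    have := hmax w hw
    omega
  have hac : a ≠ c := by
    rintro rfl
    obtain ⟨n, han⟩ := hG.preconnected.exists_adj_of_nontrivial a
    have := hca n han
    rw [dist_self, Nat.le_zero, hG.dist_eq_zero_iff] at this
    exact G.loopless.irrefl a (this ▸ han)
  exact ⟨c, hac, hc, hca⟩

lemma exists_ne_mem_Mset_beyond [Finite V] [Nontrivial V] (hG : G.Connected) (x y : V) :
    ∃ a₁ ∈ Mset G ∩ G.beyond y x, ∃ a₂ ∈ Mset G ∩ G.beyond x y, a₁ ≠ a₂ := by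
  rcases eq_or_ne x y with rfl | hxy
  · obtain ⟨a, -, ha⟩ := exists_mem_beyond_maxDistFrom hG x x
    obtain ⟨b, hab⟩ := mem_Mset_of_maxDistFrom hG ha
    rw [beyond_self]
    exact ⟨a, ⟨⟨b, hab⟩, trivial⟩, b, ⟨⟨a, (SRGraph G).adj_symm hab⟩, trivial⟩, hab.1⟩
  · obtain ⟨a₁, hb₁, hm₁⟩ := exists_mem_beyond_maxDistFrom hG x y
    obtain ⟨a₂, hb₂, hm₂⟩ := exists_mem_beyond_maxDistFrom hG y x
    exact ⟨a₁, ⟨mem_Mset_of_maxDistFrom hG hm₁, hb₁⟩, a₂, ⟨mem_Mset_of_maxDistFrom hG hm₂, hb₂⟩,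
      fun h => (disjoint_beyond hG hxy).ne_of_mem hb₁ (h ▸ hb₂) rfl⟩

lemma finsum_Sset_le_finsum_Sset_boxProd_indicator [Finite V] [Nontrivial V] [Finite W]
    (hG : G.Connected) (hH : H.Connected) {f : W → ℝ} (hf : ∀ b, 0 ≤ f b) (x y : V) (u v : W) :
    ∑ᶠ b ∈ Sset H u v, f b ≤
      ∑ᶠ p ∈ Sset (G □ H) (x, u) (y, v), (Mset G ×ˢ univ).indicator (f ∘ Prod.snd) p := by
  set g := (Mset G ×ˢ univ).indicator (f ∘ Prod.snd)
  have hfibre : ∀ a ∈ Mset G, ∀ t : Set W, ∑ᶠ p ∈ {a} ×ˢ t, g p = ∑ᶠ b ∈ t, f b :=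
    fun a ha t => by
      rw [singleton_prod, finsum_mem_image (Prod.mk_right_injective a).injOn]
      exact finsum_mem_congr rfl fun b _ => indicator_of_mem (mk_mem_prod ha (mem_univ b)) _
  obtain ⟨a₁, ⟨hM₁, hb₁⟩, a₂, ⟨hM₂, hb₂⟩, hne⟩ := exists_ne_mem_Mset_beyond hG x y
  calc ∑ᶠ b ∈ Sset H u v, f b ≤ ∑ᶠ b ∈ H.beyond v u, f b + ∑ᶠ b ∈ H.beyond u v, f b := by
        rw [Sset_eq_beyond_union hH]
        exact finsum_mem_union_le hf (toFinite _) (toFinite _)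
    _ = ∑ᶠ p ∈ {a₁} ×ˢ H.beyond v u ∪ {a₂} ×ˢ H.beyond u v, g p := by
      rw [finsum_mem_union (disjoint_prod.mpr (.inl (disjoint_singleton.mpr hne))) (toFinite _)
        (toFinite _), hfibre a₁ hM₁, hfibre a₂ hM₂]
    _ ≤ ∑ᶠ p ∈ Sset (G □ H) (x, u) (y, v), g p := by
      refine finsum_mem_le_finsum_mem_of_subset
        (indicator_nonneg fun p _ => hf p.2) (toFinite _) ?_
      rw [Sset_boxProd hG hH]
      exact union_subset_union (prod_mono (singleton_subset_iff.mpr hb₁) le_rfl)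
        (prod_mono (singleton_subset_iff.mpr hb₂) le_rfl)

lemma isSRF_boxProd_indicator [Finite V] [Nontrivial V] [Finite W] [Nontrivial W]
    (hG : G.Connected) (hH : H.Connected) {f : W → ℝ} (hf : IsSRF H f) :
    IsSRF (G □ H) ((Mset G ×ˢ univ).indicator (f ∘ Prod.snd)) := by
  refine ⟨fun p => ?_, fun ⟨x, u⟩ ⟨y, v⟩ _ => ?_⟩
  · by_cases hp : p ∈ Mset G ×ˢ univ
    · rw [indicator_of_mem hp]
      exact hf.1 p.2
    · rw [indicator_of_notMem hp]
      exact ⟨le_rfl, zero_le_one⟩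
  refine le_trans ?_ (finsum_Sset_le_finsum_Sset_boxProd_indicator hG hH (fun b => (hf.1 b).1)
    x y u v)
  rcases eq_or_ne u v with rfl | huv
  · obtain ⟨p, q, hpq⟩ := exists_pair_ne W
    refine (hf.2 p q hpq).trans (finsum_mem_le_finsum_mem_of_subset (fun b => (hf.1 b).1)
      (toFinite _) ?_)
    rw [Sset_self hH]
    exact subset_univ _
  · exact hf.2 u v huv

lemma finsum_indicator_prod_univ [Finite V] [Finite W] (s : Set V) (f : W → ℝ) :
    ∑ᶠ p, (s ×ˢ univ).indicator (f ∘ Prod.snd) p = s.ncard * ∑ᶠ b, f b := by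
  rw [← finsum_mem_def, finsum_mem_prod _ (toFinite _) (toFinite _)]
  simp only [Function.comp_apply, finsum_mem_univ]
  rw [finsum_mem_eq_finite_toFinset_sum _ (toFinite s), Finset.sum_const,
    ncard_eq_toFinset_card s (toFinite s), nsmul_eq_mul]

theorem sdimf_boxProd_le_ncard_Mset_mul [Finite V] [Nontrivial V] [Finite W] [Nontrivial W]
    (hG : G.Connected) (hH : H.Connected) : sdimf (G □ H) ≤ (Mset G).ncard * sdimf H := by
  obtain ⟨x⟩ := ‹Nontrivial V›.to_nonempty
  obtain ⟨a, -, ha⟩ := exists_mem_beyond_maxDistFrom hG x x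
  have hM : (0 : ℝ) < (Mset G).ncard :=
    Nat.cast_pos.mpr ((ncard_pos (toFinite _)).mpr ⟨a, mem_Mset_of_maxDistFrom hG ha⟩)
  rw [← div_le_iff₀' hM]
  refine le_sdimf hH fun f hf => ?_
  rw [div_le_iff₀' hM, ← finsum_indicator_prod_univ]
  exact sdimf_le (isSRF_boxProd_indicator hG hH hf)

lemma sdimf_eq_of_equiv {V' : Type*} {G' : SimpleGraph V'} (e : V ≃ V')
    (he : ∀ x y, e '' Sset G x y = Sset G' (e x) (e y)) : sdimf G = sdimf G' := by
  have hSRF : ∀ g : V' → ℝ, IsSRF G' g ↔ IsSRF G (g ∘ e) := fun g => by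
    have hsum : ∀ x y, ∑ᶠ z ∈ Sset G x y, g (e z) = ∑ᶠ z ∈ Sset G' (e x) (e y), g z :=
      fun x y => by rw [← he, finsum_mem_image e.injective.injOn]
    simp only [IsSRF, Function.comp_apply, hsum]
    refine and_congr e.forall_congr_right.symm ?_
    rw [← e.forall_congr_right]
    refine forall_congr' fun x => ?_
    rw [← e.forall_congr_right]
    simp only [ne_eq, EmbeddingLike.apply_eq_iff_eq]
  unfold sdimf
  congr 1
  ext s
  constructor
  · rintro ⟨g, hg, rfl⟩
    refine ⟨g ∘ e.symm, (hSRF _).mpr (by simpa [Function.comp_def] using hg), ?_⟩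
    rw [← finsum_comp_equiv e]
    simp
  · rintro ⟨g, hg, rfl⟩
    exact ⟨g ∘ e, (hSRF g).mp hg, (finsum_comp_equiv e).symm⟩

lemma image_swap_Sset_boxProd (hG : G.Connected) (hH : H.Connected) (p q : V × W) :
    Prod.swap '' Sset (G □ H) p q = Sset (H □ G) p.swap q.swap := by
  rw [Sset_boxProd hG hH, Sset_boxProd hH hG, image_union, image_swap_prod, image_swap_prod]
  rfl

lemma sdimf_boxProd_comm (hG : G.Connected) (hH : H.Connected) :
    sdimf (G □ H) = sdimf (H □ G) :=
  sdimf_eq_of_equiv (Equiv.prodComm V W) (image_swap_Sset_boxProd hG hH)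

end SimpleGraph

/-- Let `G` and `H` be connected graphs of order at least two. Then
`max{2·sdim_f(G), 2·sdim_f(H)} ≤ sdim_f(G □ H) ≤ min{|M(G)|·sdim_f(H), |M(H)|·sdim_f(G)}`. -/
theorem sdimf_boxProd_bounds {V W : Type*} [Fintype V] [Fintype W]
    (G : SimpleGraph V) (H : SimpleGraph W)
    (hG : G.Connected) (hH : H.Connected)
    (hn : 2 ≤ Fintype.card V) (hm : 2 ≤ Fintype.card W) :
    max (2 * sdimf G) (2 * sdimf H) ≤ sdimf (G.boxProd H) ∧
    sdimf (G.boxProd H) ≤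
      min (((Mset G).ncard : ℝ) * sdimf H) (((Mset H).ncard : ℝ) * sdimf G) := by
  have : Nontrivial V := Fintype.one_lt_card_iff_nontrivial.mp hn
  have : Nontrivial W := Fintype.one_lt_card_iff_nontrivial.mp hm
  have hcomm := sdimf_boxProd_comm hG hH
  refine ⟨max_le (two_mul_sdimf_le_sdimf_boxProd hG hH) ?_,
    le_min (sdimf_boxProd_le_ncard_Mset_mul hG hH) ?_⟩
  · rw [hcomm]
    exact two_mul_sdimf_le_sdimf_boxProd hH hG
  · rw [hcomm]
    exact sdimf_boxProd_le_ncard_Mset_mul hH hG
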